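/- Let q > 2 be a prime power, h ≥ 2, and L₁, L₂, L₃ pairwise disjoint subsets of PG(2, q^h), each projectively equivalent to the trace-construction blocking set. Then L₁ ∪ L₂ ∪ L₃ is a minimal 3-fold blocking set: every line meets it in at least 3 points, and every point of it lies on a line meeting it in exactly 3 points. -/

import Mathlib

/-- The relative trace `x ↦ x + x^q + ⋯ + x^{q^{h-1}}`. -/
def Tr (q h : ℕ) {K : Type*} [Field K] (x : K) : K :=
  ∑ i ∈ Finset.range h, x ^ q ^ i

/-- The line of `PG(2, K)` with equation `a 0 * X + a 1 * Y + a 2 * Z = 0`. -/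
def projLine {K : Type*} [Field K] (a : Fin 3 → K) :
    Set (Projectivization K (Fin 3 → K)) :=
  {P | ∑ i, a i * P.rep i = 0}

/-- A subset of `PG(2, K)` is a line if it is `projLine a` for some nonzero `a`. -/
def IsLine {K : Type*} [Field K] (ℓ : Set (Projectivization K (Fin 3 → K))) : Prop :=
  ∃ a : Fin 3 → K, a ≠ 0 ∧ ℓ = projLine a

/-- The trace-construction point set
`{(x : Tr(x) : y) : x ∈ F_{q^h}, y ∈ F_q, (x,y) ≠ (0,0)}` in `PG(2, q^h)`. -/
def traceSet (q h : ℕ) (F K : Type*) [Field F] [Field K] [Algebra F K] :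
    Set (Projectivization K (Fin 3 → K)) :=
  {P | ∃ (x : K) (y : F), (x ≠ 0 ∨ y ≠ 0) ∧
    ∃ hv : (![x, Tr q h x, algebraMap F K y] : Fin 3 → K) ≠ 0,
      P = Projectivization.mk K (![x, Tr q h x, algebraMap F K y]) hv}

/-- `L` is projectively equivalent to the trace construction. -/
def ProjEquivTrace (q h : ℕ) (F K : Type*) [Field F] [Field K] [Algebra F K]
    (L : Set (Projectivization K (Fin 3 → K))) : Prop :=
  ∃ σ : (Fin 3 → K) ≃ₗ[K] (Fin 3 → K),
    Projectivization.map σ.toLinearMap σ.injective '' traceSet q h F K = L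

/-!
Write `q = |F|`. Each copy of the trace construction is an `F`-linear set: the points `⟨w⟩`,
`w ≠ 0`, of an `F`-subspace `W ≤ K³` with `|W| = |K| q` (the trace is `F`-linear, being a sum of
powers of the Frobenius of `K/F`). As `|W| > |K|`, every linear functional has a nonzero zero on
`W`, so every line meets the linear set; and a line through two of its points `⟨w₁⟩ ≠ ⟨w₂⟩`
contains its `q + 1` points `⟨w₂⟩`, `⟨w₁ + c w₂⟩` (`c ∈ F`). Hence every line meets the union of
three disjoint copies in exactly `3` or in at least `q + 3` points. If all `|K| + 1` lines through a
point `P` of the union were of the second kind, the union would have more than `(|K| + 1)(q + 2)`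
points, while a linear set has at most `(|K| q - 1)/(q - 1)` points; for `q ≥ 3` these bounds are
incompatible.
-/

open Function Projectivization Matrix
open scoped LinearAlgebra.Projectivization

section Plane

variable {K : Type*} [Field K]

theorem mem_projLine_iff {a : Fin 3 → K} {P : ℙ K (Fin 3 → K)} :
    P ∈ projLine a ↔ a ⬝ᵥ P.rep = 0 :=
  Iff.rfl

theorem mk_mem_projLine_iff {a v : Fin 3 → K} (hv : v ≠ 0) :
    mk K v hv ∈ projLine a ↔ a ⬝ᵥ v = 0 := by
  obtain ⟨c, hc⟩ := exists_smul_eq_mk_rep K v hv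
  rw [mem_projLine_iff, ← hc, Units.smul_def, dotProduct_smul, smul_eq_zero,
    or_iff_right c.ne_zero]

theorem eq_mk_cross_of_mem_projLine_inter {a b : Fin 3 → K} (hab : a ⨯₃ b ≠ 0)
    {P : ℙ K (Fin 3 → K)} (hP : P ∈ projLine a ∩ projLine b) : P = mk K (a ⨯₃ b) hab := by
  obtain ⟨ha, hb⟩ := hP
  rw [mem_projLine_iff] at ha hb
  rw [← P.mk_rep, mk_eq_mk_iff_crossProduct_eq_zero, cross_cross_eq_smul_sub_smul',
    dotProduct_comm, hb, ha, zero_smul, zero_smul, sub_zero]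

theorem eq_of_mem_projLine_inter {a b : Fin 3 → K} (hab : a ⨯₃ b ≠ 0)
    {P Q : ℙ K (Fin 3 → K)} (hP : P ∈ projLine a ∩ projLine b)
    (hQ : Q ∈ projLine a ∩ projLine b) : P = Q := by
  rw [eq_mk_cross_of_mem_projLine_inter hab hP, eq_mk_cross_of_mem_projLine_inter hab hQ]

/-- Up to scalars, the points of the line through `⟨a⟩` and `⟨b⟩`; read as coefficient vectors,
the lines through the point `⟨a ⨯₃ b⟩`. -/
def pencil (a b : Fin 3 → K) : Option K → Fin 3 → K
  | none => b
  | some c => a + c • b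

theorem pencil_cross_pencil_ne_zero {a b : Fin 3 → K} (hab : a ⨯₃ b ≠ 0) {s t : Option K}
    (hst : s ≠ t) : pencil a b s ⨯₃ pencil a b t ≠ 0 := by
  rcases s with _ | c <;> rcases t with _ | d
  · exact absurd rfl hst
  · simp only [pencil, map_add, map_smul, _root_.cross_self, smul_zero, add_zero]
    rwa [← cross_anticomm, neg_ne_zero]
  · simpa only [pencil, map_add, map_smul, LinearMap.add_apply, LinearMap.smul_apply,
      _root_.cross_self, smul_zero, add_zero] using hab
  · have hcd : d - c ≠ 0 := sub_ne_zero.2 fun h => hst (by rw [h])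
    have : pencil a b (some c) ⨯₃ pencil a b (some d) = (d - c) • (a ⨯₃ b) := by
      simp only [pencil, map_add, map_smul, LinearMap.add_apply, LinearMap.smul_apply,
        _root_.cross_self, smul_zero, add_zero, zero_add, ← cross_anticomm b a]
      module
    rw [this]
    exact smul_ne_zero hcd hab

theorem pencil_ne_zero {a b : Fin 3 → K} (hab : a ⨯₃ b ≠ 0) (t : Option K) :
    pencil a b t ≠ 0 := by
  obtain ⟨s, hst⟩ : ∃ s, t ≠ s := by
    rcases t with _ | c
    exacts [⟨some 0, by simp⟩, ⟨none, by simp⟩]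
  intro h
  simpa [h] using pencil_cross_pencil_ne_zero hab hst

theorem dotProduct_pencil_eq_zero {a b v : Fin 3 → K} (ha : v ⬝ᵥ a = 0) (hb : v ⬝ᵥ b = 0)
    (t : Option K) : v ⬝ᵥ pencil a b t = 0 := by
  rcases t with _ | c <;> simp [pencil, dotProduct_add, ha, hb]

theorem exists_cross_ne_zero_of_dotProduct_eq_zero {v : Fin 3 → K} (hv : v ≠ 0) :
    ∃ a b : Fin 3 → K, a ⬝ᵥ v = 0 ∧ b ⬝ᵥ v = 0 ∧ a ⨯₃ b ≠ 0 := by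
  obtain ⟨x, hx⟩ : ∃ x, v ⨯₃ x ≠ 0 := by
    by_contra! h
    apply hv
    ext i
    fin_cases i
    · simpa [cross_apply] using congrFun (h (Pi.single 1 1)) 2
    · simpa [cross_apply] using congrFun (h (Pi.single 0 1)) 2
    · simpa [cross_apply] using congrFun (h (Pi.single 0 1)) 1
  obtain ⟨y, hy⟩ : ∃ y, (v ⨯₃ x) ⬝ᵥ y ≠ 0 := by
    by_contra! h
    exact hx (dotProduct_eq_zero_iff.1 h)
  refine ⟨v ⨯₃ x, v ⨯₃ y, by rw [dotProduct_comm, dot_self_cross],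
    by rw [dotProduct_comm, dot_self_cross], ?_⟩
  rw [cross_cross_eq_smul_sub_smul', dot_self_cross, zero_smul, sub_zero]
  exact smul_ne_zero hy hv

end Plane

section LinearSet

variable {F K V : Type*} [Field F] [Field K] [AddCommGroup V] [Module K V] [Module F V]

variable (K) in
def linearSet (W : Submodule F V) : Set (ℙ K V) :=
  {P | ∃ w ∈ W, ∃ hw : w ≠ 0, mk K w hw = P}

theorem mk_mem_linearSet {W : Submodule F V} {w : V} (hW : w ∈ W) (hw : w ≠ 0) :
    mk K w hw ∈ linearSet K W :=
  ⟨w, hW, hw, rfl⟩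

variable [Algebra F K] [IsScalarTower F K V]

theorem image_map_linearSet (σ : V ≃ₗ[K] V) (W : Submodule F V) :
    Projectivization.map σ.toLinearMap σ.injective '' linearSet K W =
      linearSet K (W.map (σ.toLinearMap.restrictScalars F)) := by
  ext P
  constructor
  · rintro ⟨_, ⟨w, hW, hw, rfl⟩, rfl⟩
    exact mk_mem_linearSet (Submodule.mem_map_of_mem hW) _
  · rintro ⟨_, ⟨w, hW, rfl⟩, hw, rfl⟩
    have hw' : w ≠ 0 := fun h => hw (by simp [h])
    exact ⟨mk K w hw', mk_mem_linearSet hW hw', map_mk _ _ _ _⟩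

variable [Finite V]

theorem ncard_linearSet_le (W : Submodule F V) :
    (linearSet K W).ncard ≤ Nat.card (ℙ F W) := by
  let toK : ℙ F W → ℙ K V := fun p => mk K (p.rep : V) (by simpa using p.rep_nonzero)
  have hsub : linearSet K W ⊆ Set.range toK := by
    rintro _ ⟨w, hW, hw, rfl⟩
    obtain ⟨c, hc⟩ := exists_smul_eq_mk_rep F (⟨w, hW⟩ : W) (by simpa using hw)
    refine ⟨mk F ⟨w, hW⟩ (by simpa using hw), ?_⟩
    exact (mk_eq_mk_iff' K _ _ _ _).2
      ⟨algebraMap F K c, by simp [← hc, algebraMap_smul, Units.smul_def]⟩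
  calc (linearSet K W).ncard ≤ (Set.range toK).ncard := Set.ncard_le_ncard hsub
    _ ≤ Nat.card (ℙ F W) := Nat.card_coe_set_eq (Set.range toK) ▸ Finite.card_range_le toK

theorem ncard_linearSet_mul_add_one_le (W : Submodule F V) :
    (linearSet K W).ncard * (Nat.card F - 1) + 1 ≤ Nat.card W := by
  rw [Projectivization.card' F W]
  gcongr
  exact ncard_linearSet_le W

end LinearSet

section PlaneLinearSet

variable {F K : Type*} [Field F] [Field K] [Algebra F K]

theorem projLine_inter_linearSet_nonempty [Finite K] {W : Submodule F (Fin 3 → K)}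
    (hW : Nat.card K < Nat.card W) (a : Fin 3 → K) :
    (projLine a ∩ linearSet K W).Nonempty := by
  obtain ⟨x, y, hxy, h⟩ : ∃ x y : W, x ≠ y ∧ a ⬝ᵥ (x : Fin 3 → K) = a ⬝ᵥ (y : Fin 3 → K) := by
    by_contra! h
    exact hW.not_ge <| Nat.card_le_card_of_injective (fun w : W => a ⬝ᵥ (w : Fin 3 → K))
      fun x y hxy => by_contra fun hne => h x y hne hxy
  have hne : (x - y : Fin 3 → K) ≠ 0 := sub_ne_zero.2 (Subtype.coe_injective.ne hxy)
  exact ⟨mk K _ hne, (mk_mem_projLine_iff hne).2 (by rw [dotProduct_sub, h, sub_self]),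
    mk_mem_linearSet (W.sub_mem x.2 y.2) hne⟩

theorem card_add_one_le_ncard_projLine_inter_linearSet [Finite F] {W : Submodule F (Fin 3 → K)}
    {a : Fin 3 → K} (h : 1 < (projLine a ∩ linearSet K W).ncard) :
    Nat.card F + 1 ≤ (projLine a ∩ linearSet K W).ncard := by
  have hfin := Set.finite_of_ncard_pos (zero_lt_one.trans h)
  obtain ⟨_, _, ⟨ha₁, w₁, hW₁, hw₁, rfl⟩, ⟨ha₂, w₂, hW₂, hw₂, rfl⟩, hne⟩ :=
    (Set.one_lt_ncard_iff hfin).1 h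
  rw [mk_mem_projLine_iff] at ha₁ ha₂
  have h12 : w₁ ⨯₃ w₂ ≠ 0 := fun h0 => hne ((mk_eq_mk_iff_crossProduct_eq_zero hw₁ hw₂).2 h0)
  let g : Option F → ℙ K (Fin 3 → K) := fun t =>
    mk K (pencil w₁ w₂ (t.map (algebraMap F K))) (pencil_ne_zero h12 _)
  have hg : g.Injective := fun s t hst => Option.map_injective (algebraMap F K).injective <|
    by_contra fun hne => pencil_cross_pencil_ne_zero h12 hne
      ((mk_eq_mk_iff_crossProduct_eq_zero _ _).1 hst)
  have hsub : Set.range g ⊆ projLine a ∩ linearSet K W := by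
    rintro _ ⟨t, rfl⟩
    refine ⟨(mk_mem_projLine_iff _).2 (dotProduct_pencil_eq_zero ha₁ ha₂ _),
      mk_mem_linearSet ?_ _⟩
    rcases t with _ | c
    exacts [hW₂, W.add_mem hW₁ (by simpa [algebraMap_smul] using W.smul_mem c hW₂)]
  calc Nat.card F + 1 = (Set.range g).ncard := by
        rw [Set.ncard_range_of_injective hg, Finite.card_option]
    _ ≤ _ := Set.ncard_le_ncard hsub hfin

end PlaneLinearSet

section TraceConstruction

variable (F K : Type*) [Field F] [Fintype F] [Field K] [Algebra F K] (h : ℕ)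

def traceMap : K →ₗ[F] K :=
  ∑ i ∈ Finset.range h, ((FiniteField.frobeniusAlgHom F K) ^ i).toLinearMap

theorem traceMap_apply (x : K) : traceMap F K h x = Tr (Fintype.card F) h x := by
  simp [traceMap, Tr, FiniteField.coe_frobeniusAlgHom, pow_iterate]

def traceParam : K × F →ₗ[F] Fin 3 → K :=
  LinearMap.pi ![LinearMap.fst F K F, (traceMap F K h).comp (LinearMap.fst F K F),
    (Algebra.linearMap F K).comp (LinearMap.snd F K F)]

theorem traceParam_apply (x : K) (y : F) :
    traceParam F K h (x, y) = ![x, Tr (Fintype.card F) h x, algebraMap F K y] := by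
  ext i
  fin_cases i <;> simp [traceParam, traceMap_apply]

theorem traceParam_injective : Function.Injective (traceParam F K h) := by
  rintro ⟨x, y⟩ ⟨x', y'⟩ hxy
  rw [traceParam_apply, traceParam_apply] at hxy
  exact Prod.ext (by simpa using congrFun hxy 0) (by simpa using congrFun hxy 2)

theorem traceSet_eq_linearSet :
    traceSet (Fintype.card F) h F K = linearSet K (LinearMap.range (traceParam F K h)) := by
  ext P
  constructor
  · rintro ⟨x, y, -, hv, rfl⟩
    exact mk_mem_linearSet (LinearMap.mem_range.2 ⟨(x, y), traceParam_apply F K h x y⟩) hv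
  · rintro ⟨_, ⟨⟨x, y⟩, rfl⟩, hw, rfl⟩
    have hxy : x ≠ 0 ∨ y ≠ 0 := by
      by_contra! hxy
      obtain ⟨rfl, rfl⟩ := hxy
      exact hw (map_zero _)
    exact ⟨x, y, hxy, traceParam_apply F K h x y ▸ hw, by simp only [traceParam_apply]⟩

theorem natCard_range_traceParam :
    Nat.card (LinearMap.range (traceParam F K h)) = Nat.card K * Nat.card F := by
  rw [← Nat.card_prod,
    Nat.card_congr (LinearEquiv.ofInjective _ (traceParam_injective F K h)).toEquiv]

end TraceConstruction

theorem sum_ncard_le_ncard_of_pairwise_disjoint {ι α : Type*} [Fintype ι] {s : Set α}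
    (hs : s.Finite) {f : ι → Set α} (hf : ∀ t, f t ⊆ s) (hd : Pairwise (Disjoint on f)) :
    ∑ t, (f t).ncard ≤ s.ncard := by
  rw [← finsum_eq_sum_of_fintype, ← Set.ncard_iUnion_of_finite (fun t => hs.subset (hf t)) hd]
  exact Set.ncard_le_ncard (Set.iUnion_subset hf) hs

theorem card_add_one_mul_lt_ncard_of_forall_lt_ncard_projLine_inter {K : Type*} [Field K]
    [Finite K] {U : Set (ℙ K (Fin 3 → K))} {P : ℙ K (Fin 3 → K)} (hP : P ∈ U) {m : ℕ}
    (hm : ∀ a, a ≠ 0 → P ∈ projLine a → m < (projLine a ∩ U).ncard) :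
    (Nat.card K + 1) * m < U.ncard := by
  have := Fintype.ofFinite K
  obtain ⟨a, b, ha, hb, hab⟩ := exists_cross_ne_zero_of_dotProduct_eq_zero P.rep_nonzero
  have hPℓ : ∀ t, P ∈ projLine (pencil a b t) := fun t => by
    rw [mem_projLine_iff, dotProduct_comm]
    exact dotProduct_pencil_eq_zero (by rwa [dotProduct_comm]) (by rwa [dotProduct_comm]) t
  have hdisj : Pairwise (Disjoint on fun t => projLine (pencil a b t) ∩ (U \ {P})) := fun s t hst =>
    Set.disjoint_left.2 fun Q hQs hQt => hQs.2.2 <|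
      eq_of_mem_projLine_inter (pencil_cross_pencil_ne_zero hab hst) ⟨hQs.1, hQt.1⟩
        ⟨hPℓ s, hPℓ t⟩
  calc (Nat.card K + 1) * m = ∑ _t : Option K, m := by
        rw [Finset.sum_const, Finset.card_univ, ← Nat.card_eq_fintype_card,
          Finite.card_option, smul_eq_mul]
    _ ≤ ∑ t, (projLine (pencil a b t) ∩ (U \ {P})).ncard := Finset.sum_le_sum fun t _ => by
        rw [← Set.inter_sdiff_assoc, Set.ncard_sdiff_singleton_of_mem (Set.mem_inter (hPℓ t) hP)]
        have := hm _ (pencil_ne_zero hab t) (hPℓ t)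
        omega
    _ ≤ (U \ {P}).ncard :=
        sum_ncard_le_ncard_of_pairwise_disjoint (Set.toFinite _) (fun _ => Set.inter_subset_right)
          hdisj
    _ < U.ncard := Set.ncard_sdiff_singleton_lt_of_mem hP

theorem ncard_inter_union_union {α : Type*} [Finite α] {s L₁ L₂ L₃ : Set α}
    (h12 : Disjoint L₁ L₂) (h13 : Disjoint L₁ L₃) (h23 : Disjoint L₂ L₃) :
    (s ∩ (L₁ ∪ L₂ ∪ L₃)).ncard = (s ∩ L₁).ncard + (s ∩ L₂).ncard + (s ∩ L₃).ncard := by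
  have hd : ∀ {A B : Set α}, Disjoint A B → Disjoint (s ∩ A) (s ∩ B) :=
    fun h => h.mono Set.inter_subset_right Set.inter_subset_right
  rw [Set.inter_union_distrib_left, Set.inter_union_distrib_left,
    Set.ncard_union_eq (by rw [← Set.inter_union_distrib_left]; exact hd (h13.union_left h23)),
    Set.ncard_union_eq (hd h12)]

section RankSuccLinearSet

variable {F K : Type*} [Field F] [Field K] [Algebra F K]

variable (F) in
/-- `L` is an `F`-linear set of rank `dim_F K + 1`, the rank of the trace construction. -/
def IsRankSuccLinearSet (L : Set (ℙ K (Fin 3 → K))) : Prop :=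
  ∃ W : Submodule F (Fin 3 → K), Nat.card W = Nat.card K * Nat.card F ∧ L = linearSet K W

theorem ProjEquivTrace.isRankSuccLinearSet [Fintype F] {h : ℕ} {L : Set (ℙ K (Fin 3 → K))}
    (hL : ProjEquivTrace (Fintype.card F) h F K L) : IsRankSuccLinearSet F L := by
  obtain ⟨σ, rfl⟩ := hL
  refine ⟨(LinearMap.range (traceParam F K h)).map (σ.toLinearMap.restrictScalars F), ?_, ?_⟩
  · rw [← natCard_range_traceParam F K h]
    exact (Nat.card_congr (Submodule.equivMapOfInjective (σ.toLinearMap.restrictScalars F)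
      σ.injective _).toEquiv).symm
  · rw [traceSet_eq_linearSet, image_map_linearSet]

variable [Finite K] {L L₁ L₂ L₃ : Set (ℙ K (Fin 3 → K))}

theorem IsRankSuccLinearSet.ncard_mul_add_one_le (hL : IsRankSuccLinearSet F L) :
    L.ncard * (Nat.card F - 1) + 1 ≤ Nat.card K * Nat.card F := by
  obtain ⟨W, hW, rfl⟩ := hL
  exact hW ▸ ncard_linearSet_mul_add_one_le W

variable [Finite F]

theorem IsRankSuccLinearSet.ncard_projLine_inter_eq_one_or (hL : IsRankSuccLinearSet F L)
    (a : Fin 3 → K) :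
    (projLine a ∩ L).ncard = 1 ∨ Nat.card F + 1 ≤ (projLine a ∩ L).ncard := by
  obtain ⟨W, hW, rfl⟩ := hL
  have hK : Nat.card K < Nat.card W := by
    rw [hW]
    exact lt_mul_of_one_lt_right Nat.card_pos Finite.one_lt_card
  have := (Set.ncard_pos (Set.toFinite _)).2 (projLine_inter_linearSet_nonempty hK a)
  by_cases h1 : (projLine a ∩ linearSet K W).ncard = 1
  · exact Or.inl h1
  · exact Or.inr (card_add_one_le_ncard_projLine_inter_linearSet (by omega))

theorem ncard_projLine_inter_union_eq_three_or (h₁ : IsRankSuccLinearSet F L₁)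
    (h₂ : IsRankSuccLinearSet F L₂) (h₃ : IsRankSuccLinearSet F L₃) (h12 : Disjoint L₁ L₂)
    (h13 : Disjoint L₁ L₃) (h23 : Disjoint L₂ L₃) (a : Fin 3 → K) :
    (projLine a ∩ (L₁ ∪ L₂ ∪ L₃)).ncard = 3 ∨
      Nat.card F + 3 ≤ (projLine a ∩ (L₁ ∪ L₂ ∪ L₃)).ncard := by
  rw [ncard_inter_union_union h12 h13 h23]
  rcases h₁.ncard_projLine_inter_eq_one_or a with _ | _ <;>
  rcases h₂.ncard_projLine_inter_eq_one_or a with _ | _ <;>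
  rcases h₃.ncard_projLine_inter_eq_one_or a with _ | _ <;> omega

theorem exists_projLine_ncard_inter_union_eq_three (hF : 3 ≤ Nat.card F)
    (h₁ : IsRankSuccLinearSet F L₁) (h₂ : IsRankSuccLinearSet F L₂)
    (h₃ : IsRankSuccLinearSet F L₃) (h12 : Disjoint L₁ L₂) (h13 : Disjoint L₁ L₃)
    (h23 : Disjoint L₂ L₃) {P : ℙ K (Fin 3 → K)} (hP : P ∈ L₁ ∪ L₂ ∪ L₃) :
    ∃ a, a ≠ 0 ∧ P ∈ projLine a ∧ (projLine a ∩ (L₁ ∪ L₂ ∪ L₃)).ncard = 3 := by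
  by_contra! hbad
  have hcount : (Nat.card K + 1) * (Nat.card F + 2) < L₁.ncard + L₂.ncard + L₃.ncard := by
    refine lt_of_lt_of_le
      (card_add_one_mul_lt_ncard_of_forall_lt_ncard_projLine_inter hP fun a ha hPa => ?_)
      ((Set.ncard_union_le _ _).trans (Nat.add_le_add_right (Set.ncard_union_le _ _) _))
    have := (ncard_projLine_inter_union_eq_three_or h₁ h₂ h₃ h12 h13 h23 a).resolve_left
      (hbad a ha hPa)
    omega
  have b₁ := h₁.ncard_mul_add_one_le
  have b₂ := h₂.ncard_mul_add_one_le
  have b₃ := h₃.ncard_mul_add_one_le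
  obtain ⟨r, hr⟩ : ∃ r, Nat.card F = r + 3 := ⟨Nat.card F - 3, by omega⟩
  rw [hr, show r + 3 - 1 = r + 2 by omega] at b₁ b₂ b₃
  rw [hr] at hcount
  nlinarith [Nat.mul_le_mul_right (r + 2) hcount, Nat.zero_le (Nat.card K * r * r),
    Nat.zero_le (Nat.card K * r)]

end RankSuccLinearSet

theorem stmt_8_general {F K : Type*} [Field F] [Field K] [Algebra F K]
    [Fintype F] [Fintype K]
    (q h : ℕ) (hq2 : 2 < q) (hcard : Fintype.card F = q)
    (L₁ L₂ L₃ : Set (Projectivization K (Fin 3 → K)))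
    (h₁ : ProjEquivTrace q h F K L₁) (h₂ : ProjEquivTrace q h F K L₂)
    (h₃ : ProjEquivTrace q h F K L₃)
    (h12 : Disjoint L₁ L₂) (h13 : Disjoint L₁ L₃) (h23 : Disjoint L₂ L₃) :
    (∀ a : Fin 3 → K, a ≠ 0 → 3 ≤ (projLine a ∩ (L₁ ∪ L₂ ∪ L₃)).ncard) ∧
    (∀ P ∈ L₁ ∪ L₂ ∪ L₃, ∃ ℓ, IsLine ℓ ∧ P ∈ ℓ ∧
      (ℓ ∩ (L₁ ∪ L₂ ∪ L₃)).ncard = 3) := by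
  subst hcard
  have hF : 3 ≤ Nat.card F := by rw [Nat.card_eq_fintype_card]; omega
  replace h₁ := h₁.isRankSuccLinearSet
  replace h₂ := h₂.isRankSuccLinearSet
  replace h₃ := h₃.isRankSuccLinearSet
  refine ⟨fun a _ => ?_, fun P hP => ?_⟩
  · rcases ncard_projLine_inter_union_eq_three_or h₁ h₂ h₃ h12 h13 h23 a with h | h <;> omega
  · obtain ⟨a, ha, hPa, h3⟩ := exists_projLine_ncard_inter_union_eq_three hF h₁ h₂ h₃ h12 h13 h23 hP
    exact ⟨projLine a, ⟨a, ha, rfl⟩, hPa, h3⟩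

/-- If `q > 2` and `L₁, L₂, L₃` are pairwise disjoint copies of the trace
construction, then `L₁ ∪ L₂ ∪ L₃` is a minimal 3-fold blocking set. -/
theorem stmt_8 {F K : Type*} [Field F] [Field K] [Algebra F K]
    [Fintype F] [Fintype K]
    (q h : ℕ) (hq : IsPrimePow q) (hq2 : 2 < q) (hcard : Fintype.card F = q)
    (hh : 2 ≤ h) (hrank : Module.finrank F K = h)
    (L₁ L₂ L₃ : Set (Projectivization K (Fin 3 → K)))
    (h₁ : ProjEquivTrace q h F K L₁) (h₂ : ProjEquivTrace q h F K L₂)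
    (h₃ : ProjEquivTrace q h F K L₃)
    (h12 : Disjoint L₁ L₂) (h13 : Disjoint L₁ L₃) (h23 : Disjoint L₂ L₃) :
    (∀ a : Fin 3 → K, a ≠ 0 → 3 ≤ (projLine a ∩ (L₁ ∪ L₂ ∪ L₃)).ncard) ∧
    (∀ P ∈ L₁ ∪ L₂ ∪ L₃, ∃ ℓ, IsLine ℓ ∧ P ∈ ℓ ∧
      (ℓ ∩ (L₁ ∪ L₂ ∪ L₃)).ncard = 3) :=
  stmt_8_general q h hq2 hcard L₁ L₂ L₃ h₁ h₂ h₃ h12 h13 h23
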